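/- There exists a finite constant C such that for every x in the open unit disc D₀ and every ε ∈ (0,1], ε^{−2}·∫_{{y : 1−ε < |y| < 1}} G₀(x,y) dy ≤ C, where the integral is with respect to two-dimensional Lebesgue measure. -/

import Mathlib

/-! In polar coordinates the integral is `∫_{1-ε}^1 2πρ · A(ρ) dρ`, where `A(ρ)` is the mean of
`G₀(x, ·)` over the circle `|y| = ρ`. The mean of `log |1 - x̄y|` vanishes because it is harmonic
on the closed unit disc, and Jensen's formula gives `log max(ρ, |x|) ≥ log ρ` for the mean of
`log |y - x|`. Hence `2πρ · A(ρ) ≤ -ρ log ρ ≤ 1 - ρ`, whose integral over `(1 - ε, 1)` is `ε²/2`. -/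

open MeasureTheory

/-- The Green function of the unit disc, identifying `ℝ²` with `ℂ`. -/
noncomputable def greenKernel (x y : ℂ) : ℝ :=
  (1 / (2 * Real.pi)) * Real.log (‖1 - (starRingEnd ℂ x) * y‖ / ‖x - y‖)

open Set Real

section Polar

variable {E : Type*} [NormedAddCommGroup E] [NormedSpace ℝ E] {f : ℂ → E}

theorem integrableOn_comp_polarCoord_symm (hf : Integrable f) :
    IntegrableOn (fun p : ℝ × ℝ ↦ p.1 • f (Complex.polarCoord.symm p)) polarCoord.target := by
  have hg : Integrable (f ∘ Complex.measurableEquivRealProd.symm) :=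
    (Complex.volume_preserving_equiv_real_prod.symm.integrable_comp_emb
      Complex.measurableEquivRealProd.symm.measurableEmbedding).mpr hf
  have hJ := (integrableOn_image_iff_integrableOn_abs_det_fderiv_smul volume
    polarCoord.open_target.measurableSet
    (fun p _ ↦ (hasFDerivAt_polarCoord_symm p).hasFDerivWithinAt) polarCoord.symm.injOn
    (f ∘ Complex.measurableEquivRealProd.symm)).mp
    (by rw [polarCoord.symm_image_target_eq_source]; exact hg.integrableOn)
  refine hJ.congr_fun (fun p hp ↦ ?_) polarCoord.open_target.measurableSet
  simp only [det_fderivPolarCoordSymm, abs_of_pos (show 0 < p.1 from hp.1), Function.comp_apply,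
    Complex.measurableEquivRealProd_symm_polarCoord_symm_apply]

theorem setIntegral_Ioo_neg_pi_pi_comp_polarCoord_symm (ρ : ℝ) :
    ∫ θ in Ioo (-π) π, f (Complex.polarCoord.symm (ρ, θ)) = (2 * π) • circleAverage f 0 ρ := by
  have hcircle : ∀ θ, Complex.polarCoord.symm (ρ, θ) = circleMap 0 ρ θ := fun θ ↦ by
    rw [Complex.polarCoord_symm_apply, circleMap_zero, Complex.exp_mul_I, Complex.ofReal_cos,
      Complex.ofReal_sin]
  rw [circleAverage_eq_integral_add (-π), smul_smul, mul_inv_cancel₀ (by positivity), one_smul,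
    intervalIntegral.integral_comp_add_right (fun θ ↦ f (circleMap 0 ρ θ)),
    ← integral_Ioc_eq_integral_Ioo, ← intervalIntegral.integral_of_le (by linarith [pi_pos])]
  simp only [hcircle]
  ring_nf

theorem integral_eq_setIntegral_Ioi_circleAverage (hf : Integrable f) :
    ∫ z, f z = ∫ ρ in Ioi 0, (2 * π * ρ) • circleAverage f 0 ρ := by
  rw [← Complex.integral_comp_polarCoord_symm, polarCoord_target, Measure.volume_eq_prod,
    setIntegral_prod _
      (by simpa [← Measure.volume_eq_prod] using integrableOn_comp_polarCoord_symm hf)]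
  refine setIntegral_congr_fun measurableSet_Ioi fun ρ _ ↦ ?_
  rw [integral_smul, setIntegral_Ioo_neg_pi_pi_comp_polarCoord_symm, smul_smul, mul_comm ρ]

theorem integrableOn_Ioi_circleAverage (hf : Integrable f) :
    IntegrableOn (fun ρ ↦ (2 * π * ρ) • circleAverage f 0 ρ) (Ioi 0) := by
  have hprod : Integrable (fun p : ℝ × ℝ ↦ p.1 • f (Complex.polarCoord.symm p))
      ((volume.restrict (Ioi 0)).prod (volume.restrict (Ioo (-π) π))) := by
    rw [Measure.prod_restrict, ← Measure.volume_eq_prod]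
    exact integrableOn_comp_polarCoord_symm hf
  refine hprod.integral_prod_left.congr (Filter.Eventually.of_forall fun ρ ↦ ?_)
  dsimp only
  rw [integral_smul, setIntegral_Ioo_neg_pi_pi_comp_polarCoord_symm, smul_smul, mul_comm ρ]

theorem circleAverage_indicator_norm_preimage [CompleteSpace E] (I : Set ℝ) (R : ℝ) :
    circleAverage ({z | ‖z‖ ∈ I}.indicator f) 0 R =
      I.indicator (fun _ ↦ circleAverage f 0 R) |R| := by
  by_cases hR : |R| ∈ I
  · rw [indicator_of_mem hR]
    refine circleAverage_congr_sphere fun z hz ↦ indicator_of_mem ?_ f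
    rwa [mem_ofPred_eq, mem_sphere_zero_iff_norm.mp hz]
  · rw [indicator_of_notMem hR, ← circleAverage_const (0 : E) 0 R]
    refine circleAverage_congr_sphere fun z hz ↦ indicator_of_notMem ?_ f
    rwa [mem_ofPred_eq, mem_sphere_zero_iff_norm.mp hz]

end Polar

theorem circleAverage_log_norm_one_sub_mul {c : ℂ} {R : ℝ} (hcR : ‖c‖ * |R| < 1) :
    circleAverage (fun z ↦ log ‖1 - c * z‖) 0 R = 0 := by
  have hne : ∀ z ∈ Metric.closedBall (0 : ℂ) |R|, 1 - c * z ≠ 0 := fun z hz ↦ by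
    refine sub_ne_zero.mpr fun h ↦ ?_
    have : ‖c * z‖ < 1 := by
      rw [norm_mul]
      exact lt_of_le_of_lt (by gcongr; simpa using hz) hcR
    simp [← h] at this
  have hharm : InnerProductSpace.HarmonicOnNhd (fun z ↦ log ‖1 - c * z‖)
      (Metric.closedBall 0 |R|) :=
    fun z hz ↦ AnalyticAt.harmonicAt_log_norm (by fun_prop) (hne z hz)
  simp [hharm.circleAverage_eq]

theorem greenKernel_eq_of_ne {x y : ℂ} (hxy : x ≠ y) (hy : 1 - starRingEnd ℂ x * y ≠ 0) :
    greenKernel x y = (2 * π)⁻¹ * (log ‖1 - starRingEnd ℂ x * y‖ - log ‖y - x‖) := by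
  rw [greenKernel, one_div, norm_sub_rev x y,
    log_div (norm_ne_zero_iff.mpr hy) (norm_ne_zero_iff.mpr (sub_ne_zero.mpr hxy.symm))]

theorem circleAverage_greenKernel {x : ℂ} {R : ℝ} (hR : R ≠ 0) (hxR : ‖x‖ * |R| < 1) :
    circleAverage (greenKernel x) 0 R = -(2 * π)⁻¹ * (log R + log⁺ (R⁻¹ * ‖x‖)) := by
  have hae : greenKernel x =ᶠ[Filter.codiscreteWithin (Metric.sphere 0 |R|)]
      fun y ↦ (2 * π)⁻¹ • (log ‖1 - starRingEnd ℂ x * y‖ - log ‖y - x‖) := by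
    filter_upwards [compl_singleton_mem_codiscreteWithin x,
      compl_singleton_mem_codiscreteWithin (starRingEnd ℂ x)⁻¹] with y hx hy
    refine greenKernel_eq_of_ne (Ne.symm hx) fun h ↦ hy (eq_inv_of_mul_eq_one_right ?_)
    linear_combination -h
  rw [circleAverage_congr_codiscreteWithin hae hR, circleAverage_fun_smul,
    circleAverage_fun_sub (MeromorphicOn.circleIntegrable_log_norm fun _ _ ↦ by fun_prop)
      (circleIntegrable_log_norm_sub_const R),
    circleAverage_log_norm_one_sub_mul (by simpa using hxR),
    circleAverage_log_norm_sub_const_eq_log_radius_add_posLog hR]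
  simp only [zero_sub, norm_neg, smul_eq_mul]
  ring

theorem two_pi_mul_mul_circleAverage_greenKernel_le {x : ℂ} {ρ : ℝ} (hρ : 0 < ρ)
    (hxρ : ‖x‖ * ρ < 1) :
    2 * π * ρ * circleAverage (greenKernel x) 0 ρ ≤ 1 - ρ := by
  rw [circleAverage_greenKernel hρ.ne' (by rwa [abs_of_pos hρ])]
  have hposLog : 0 ≤ log⁺ (ρ⁻¹ * ‖x‖) := posLog_nonneg
  have hρlog : ρ - 1 ≤ ρ * log ρ := by
    simpa [mul_sub, hρ.ne'] using mul_le_mul_of_nonneg_left (one_sub_inv_le_log_of_pos hρ) hρ.le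
  calc 2 * π * ρ * (-(2 * π)⁻¹ * (log ρ + log⁺ (ρ⁻¹ * ‖x‖)))
      = -(ρ * log ρ) - ρ * log⁺ (ρ⁻¹ * ‖x‖) := by field_simp; ring
    _ ≤ 1 - ρ := by linarith [mul_nonneg hρ.le hposLog]

theorem two_pi_mul_mul_circleAverage_indicator_greenKernel_le {x : ℂ} (hx : ‖x‖ < 1) {a ρ : ℝ}
    (hρ : 0 < ρ) :
    (2 * π * ρ) • circleAverage ({y | ‖y‖ ∈ Ioo a 1}.indicator (greenKernel x)) 0 ρ ≤
      (Ioo a 1).indicator (fun ρ ↦ 1 - ρ) ρ := by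
  rw [circleAverage_indicator_norm_preimage, abs_of_pos hρ]
  by_cases hρI : ρ ∈ Ioo a 1
  · simpa only [indicator_of_mem hρI, smul_eq_mul] using
      two_pi_mul_mul_circleAverage_greenKernel_le hρ
        (mul_lt_one_of_nonneg_of_lt_one_left (norm_nonneg x) hx hρI.2.le)
  · simp [indicator_of_notMem hρI]

theorem setIntegral_Ioi_indicator_Ioo_one_sub {ε : ℝ} (hε : 0 ≤ ε) (hε1 : ε ≤ 1) :
    ∫ ρ in Ioi 0, (Ioo (1 - ε) 1).indicator (fun ρ ↦ 1 - ρ) ρ = ε ^ 2 / 2 := by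
  rw [setIntegral_indicator measurableSet_Ioo,
    inter_eq_self_of_subset_right (Ioo_subset_Ioi_self.trans (Ioi_subset_Ioi (by linarith))),
    ← integral_Ioc_eq_integral_Ioo, ← intervalIntegral.integral_of_le (by linarith),
    intervalIntegral.integral_comp_sub_left (fun ρ ↦ ρ), integral_id]
  ring

/-- The estimate `∫_{F_ε} G_D(x,y) dy ≤ C·ε²` from the proof of Proposition 2.1, for the
unit disc: there is a finite `C` such that for every `x ∈ D₀` and `ε ∈ (0,1]`,
`ε⁻²·∫_{1−ε<|y|<1} G₀(x,y) dy ≤ C`. -/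
theorem integral_greenKernel_annulus_le :
    ∃ C : ℝ, ∀ x : ℂ, ‖x‖ < 1 → ∀ ε : ℝ, 0 < ε → ε ≤ 1 →
      (ε ^ 2)⁻¹ * ∫ y in {y : ℂ | 1 - ε < ‖y‖ ∧ ‖y‖ < 1}, greenKernel x y ≤ C := by
  refine ⟨1 / 2, fun x hx ε hε hε1 ↦ ?_⟩
  set I := Ioo (1 - ε) 1
  rw [inv_mul_le_iff₀ (by positivity), mul_one_div]
  change ∫ y in {y : ℂ | ‖y‖ ∈ I}, greenKernel x y ≤ ε ^ 2 / 2
  have hS : MeasurableSet {y : ℂ | ‖y‖ ∈ I} := measurable_norm measurableSet_Ioo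
  by_cases hint : IntegrableOn (greenKernel x) {y : ℂ | ‖y‖ ∈ I}
  swap
  · rw [integral_undef hint]; positivity
  have hind := hint.integrable_indicator hS
  have hmajorant : Integrable (I.indicator fun ρ : ℝ ↦ 1 - ρ) :=
    ((continuous_const.sub continuous_id).integrableOn_Icc.mono_set Ioo_subset_Icc_self)
      |>.integrable_indicator measurableSet_Ioo
  rw [← integral_indicator hS, integral_eq_setIntegral_Ioi_circleAverage hind,
    ← setIntegral_Ioi_indicator_Ioo_one_sub hε.le hε1]
  exact setIntegral_mono_on (integrableOn_Ioi_circleAverage hind) hmajorant.integrableOn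
    measurableSet_Ioi fun ρ hρ ↦ two_pi_mul_mul_circleAverage_indicator_greenKernel_le hx hρ
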